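/- The Klee–Minty polytope in dimension d is combinatorially isomorphic to the d-cube; in particular, its vertices are in bijection with {0,1}^d, where the vertex corresponding to ε ∈ {0,1}^d is determined by choosing, for each i, equality in the lower bound (εᵢ = 0) or the upper bound (εᵢ = 1) of the i-th pair of inequalities. -/

import Mathlib

/-!
For `0 ≤ c < 1/2` let `P c` be cut out by `c yₙ ≤ yₙ₊₁ ≤ 1 - c yₙ` for `n < d`, where `y₀ = 0` and
`yₙ₊₁ = xₙ`; the Klee–Minty cube is `P (1/3)` and the unit cube is `P 0`. As `c yₙ < 1/2`, the two
bounds of a pair never meet, so the sets `F σ` obtained by making, for each `n`, the lower bound,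
the upper bound or neither tight are nonempty (each contains a vertex, built by following the
chosen bounds) and `F σ ⊆ F τ` iff `σ` extends `τ`, whatever `c` is.

These sets are exactly the nonempty exposed faces. Summation by parts with the backward recursion
`gₙ = μₙ - c |gₙ₊₁|` rewrites a functional `∑ μₙ xₙ` as `∑ (gₙ yₙ₊₁ + c |gₙ| yₙ)`; on `P c` each
summand is at most `max gₙ 0`, with equality iff the bound on the side of the sign of `gₙ` is tight.
Hence the exposed-face lattices of all the `P c` are isomorphic.

A point of `P c` with a free pair `k`, chosen last, is not extreme: moving `yₖ₊₁` slightly up or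
down and following the tight bounds afterwards stays inside `P c`.
-/

open Set

/-- The Klee–Minty cube in dimension `d`:
`0 ≤ x₁ ≤ 1` and `(1/3)xᵢ ≤ x_{i+1} ≤ 1 - (1/3)xᵢ` for `1 ≤ i < d`. -/
def kleeMinty (d : ℕ) : Set (Fin d → ℝ) :=
  {x | (∀ h : 0 < d, 0 ≤ x ⟨0, h⟩ ∧ x ⟨0, h⟩ ≤ 1) ∧
       ∀ (i : ℕ) (h : i + 1 < d),
         (1 / 3) * x ⟨i, Nat.lt_of_succ_lt h⟩ ≤ x ⟨i + 1, h⟩ ∧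
         x ⟨i + 1, h⟩ ≤ 1 - (1 / 3) * x ⟨i, Nat.lt_of_succ_lt h⟩}

/-- The standard `d`-cube `[0,1]^d`. -/
def stdCube (d : ℕ) : Set (Fin d → ℝ) := {x | ∀ i, 0 ≤ x i ∧ x i ≤ 1}

/-- The point of the Klee–Minty cube determined by `ε ∈ {0,1}^d`: for each
`i`, equality holds in the lower bound (`εᵢ = 0`, i.e. `false`) or the upper
bound (`εᵢ = 1`, i.e. `true`) of the `i`-th pair of defining inequalities. -/
def kmVertexEq (d : ℕ) (ε : Fin d → Bool) (x : Fin d → ℝ) : Prop :=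
  (∀ h : 0 < d, x ⟨0, h⟩ = if ε ⟨0, h⟩ then 1 else 0) ∧
  ∀ (i : ℕ) (h : i + 1 < d),
    x ⟨i + 1, h⟩ =
      if ε ⟨i + 1, h⟩ then 1 - (1 / 3) * x ⟨i, Nat.lt_of_succ_lt h⟩
      else (1 / 3) * x ⟨i, Nat.lt_of_succ_lt h⟩

lemma nonempty_orderIso_of_surjective {α β γ : Type*} [PartialOrder β] [PartialOrder γ]
    {f : α → β} {g : α → γ} (hf : Function.Surjective f) (hg : Function.Surjective g)
    (hfg : ∀ a a', f a ≤ f a' ↔ g a ≤ g a') : Nonempty (β ≃o γ) := by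
  have hgf : ∀ a, g (Function.surjInv hf (f a)) = g a := fun a =>
    le_antisymm ((hfg _ _).1 (Function.surjInv_eq hf _).le)
      ((hfg _ _).1 (Function.surjInv_eq hf _).ge)
  let e : β ↪o γ := OrderEmbedding.ofMapLEIff (fun b => g (Function.surjInv hf b)) fun b b' => by
    rw [← hfg, Function.surjInv_eq hf, Function.surjInv_eq hf]
  refine ⟨OrderIso.ofSurjective e fun y => ?_⟩
  obtain ⟨a, rfl⟩ := hg y
  exact ⟨f a, hgf a⟩

namespace KleeMinty

variable {d : ℕ} {c : ℝ}

/-- `seq x = (0, x₀, …, x_{d-1}, 0, 0, …)`: the leading `0` makes `0 ≤ x₀ ≤ 1` the `n = 0`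
instance of the constraints of `deformedCube`. -/
def seq (x : Fin d → ℝ) : ℕ → ℝ
  | 0 => 0
  | n + 1 => if h : n < d then x ⟨n, h⟩ else 0

@[simp] lemma seq_zero (x : Fin d → ℝ) : seq x 0 = 0 := rfl

lemma seq_succ (x : Fin d → ℝ) {n : ℕ} (h : n < d) : seq x (n + 1) = x ⟨n, h⟩ := dif_pos h

@[simp] lemma seq_fin_succ (x : Fin d → ℝ) (i : Fin d) : seq x (i + 1) = x i := seq_succ x i.2

def ofSeq (y : ℕ → ℝ) : Fin d → ℝ := fun i => y (i + 1)

lemma seq_ofSeq {y : ℕ → ℝ} (hy : y 0 = 0) {n : ℕ} (hn : n ≤ d) :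
    seq (ofSeq (d := d) y) n = y n := by
  cases n with
  | zero => exact hy.symm
  | succ n => exact seq_succ _ hn

def deformedCube (c : ℝ) (d : ℕ) : Set (Fin d → ℝ) :=
  {x | ∀ n < d, seq x (n + 1) ∈ Icc (c * seq x n) (1 - c * seq x n)}

def bound (c t : ℝ) : Bool → ℝ
  | true => 1 - c * t
  | false => c * t

lemma bound_mem_Icc {t : ℝ} (h : 2 * (c * t) ≤ 1) (b : Bool) :
    bound c t b ∈ Icc (c * t) (1 - c * t) := by
  cases b <;> constructor <;> simp only [bound] <;> linarith

lemma bound_injective {t : ℝ} (h : 2 * (c * t) ≠ 1) : Function.Injective (bound c t) := by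
  intro b b' hbb'
  cases b <;> cases b' <;> simp only [bound] at hbb' <;> first | rfl | (exfalso; apply h; linarith)

lemma bound_add_mul (t u e : ℝ) (b : Bool) :
    bound c (t + e * u) b = bound c t b + e * (bound c u b - bound c 0 b) := by
  cases b <;> simp only [bound] <;> ring

lemma two_mul_mul_lt_one (hc : c ∈ Ico 0 (1 / 2)) {t : ℝ} (ht : t ∈ Icc 0 1) :
    2 * (c * t) < 1 := by
  nlinarith [hc.1, hc.2, ht.1, ht.2]

lemma mem_Icc_of_forall_lt (hc : 0 ≤ c) {y : ℕ → ℝ} (hy : y 0 = 0) {n : ℕ}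
    (h : ∀ m < n, y (m + 1) ∈ Icc (c * y m) (1 - c * y m)) : y n ∈ Icc 0 1 := by
  induction n with
  | zero => simp [hy]
  | succ n ih =>
    obtain ⟨h0, h1⟩ := ih fun m hm => h m (by omega)
    obtain ⟨hlo, hhi⟩ := h n (by omega)
    exact ⟨(mul_nonneg hc h0).trans hlo, hhi.trans (by nlinarith)⟩

lemma forall_mem_Icc_of_tight (hc : c ∈ Ico 0 (1 / 2)) {y : ℕ → ℝ} (hy : y 0 = 0) {N : ℕ}
    (h : ∀ n < N, y (n + 1) ∈ Icc (c * y n) (1 - c * y n) ∨ ∃ b, y (n + 1) = bound c (y n) b) :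
    ∀ n < N, y (n + 1) ∈ Icc (c * y n) (1 - c * y n) := by
  intro n
  induction n using Nat.strong_induction_on with
  | _ n ih =>
    intro hn
    rcases h n hn with hmem | ⟨b, hb⟩
    · exact hmem
    · have hyn := mem_Icc_of_forall_lt hc.1 hy fun m hm => ih m hm (hm.trans hn)
      exact hb ▸ bound_mem_Icc (two_mul_mul_lt_one hc hyn).le b

lemma seq_mem_Icc (hc : 0 ≤ c) {x : Fin d → ℝ} (hx : x ∈ deformedCube c d) {n : ℕ}
    (hn : n ≤ d) : seq x n ∈ Icc 0 1 :=
  mem_Icc_of_forall_lt hc rfl fun m hm => hx m (by omega)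

def TightAt (c : ℝ) (x : Fin d → ℝ) (i : Fin d) (b : Bool) : Prop :=
  seq x (i + 1) = bound c (seq x i) b

lemma TightAt.unique (hc : c ∈ Ico 0 (1 / 2)) {x : Fin d → ℝ} (hx : x ∈ deformedCube c d)
    {i : Fin d} {b b' : Bool} (h : TightAt c x i b) (h' : TightAt c x i b') : b = b' :=
  bound_injective (two_mul_mul_lt_one hc (seq_mem_Icc hc.1 hx i.2.le)).ne (h.symm.trans h')

lemma mem_of_forall_tightAt (hc : c ∈ Ico 0 (1 / 2)) {x : Fin d → ℝ} {ε : Fin d → Bool}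
    (h : ∀ i, TightAt c x i (ε i)) : x ∈ deformedCube c d :=
  forall_mem_Icc_of_tight hc rfl fun n hn => .inr ⟨_, h ⟨n, hn⟩⟩

lemma eq_of_forall_tightAt {x x' : Fin d → ℝ} {ε : Fin d → Bool}
    (h : ∀ i, TightAt c x i (ε i)) (h' : ∀ i, TightAt c x' i (ε i)) : x = x' := by
  have hseq : ∀ n, seq x n = seq x' n := by
    intro n
    induction n with
    | zero => rfl
    | succ n ih =>
      by_cases hn : n < d
      · have e : seq x (n + 1) = bound c (seq x n) (ε ⟨n, hn⟩) := h ⟨n, hn⟩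
        have e' : seq x' (n + 1) = bound c (seq x' n) (ε ⟨n, hn⟩) := h' ⟨n, hn⟩
        rw [e, e', ih]
      · simp [seq, hn]
  funext i
  simpa using hseq (i + 1)

def vertexSeq (c : ℝ) (ε : Fin d → Bool) : ℕ → ℝ
  | 0 => 0
  | n + 1 => if h : n < d then bound c (vertexSeq c ε n) (ε ⟨n, h⟩) else 0

def vertex (c : ℝ) (ε : Fin d → Bool) : Fin d → ℝ := ofSeq (vertexSeq c ε)

lemma vertex_tightAt (ε : Fin d → Bool) (i : Fin d) : TightAt c (vertex c ε) i (ε i) := by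
  have h0 : vertexSeq c ε 0 = 0 := rfl
  simp only [TightAt, vertex, seq_ofSeq h0 i.2, seq_ofSeq h0 i.2.le]
  exact dif_pos i.2

/-- `σ i = some b` makes the `i`-th pair tight at its upper (`b = true`) or lower bound;
`σ i = none` leaves it free. -/
def face (c : ℝ) (σ : Fin d → Option Bool) : Set (Fin d → ℝ) :=
  {x ∈ deformedCube c d | ∀ i, ∀ b ∈ σ i, TightAt c x i b}

lemma vertex_mem_face (hc : c ∈ Ico 0 (1 / 2)) {σ : Fin d → Option Bool} {ε : Fin d → Bool}
    (h : ∀ i, ∀ b ∈ σ i, ε i = b) : vertex c ε ∈ face c σ :=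
  ⟨mem_of_forall_tightAt hc (vertex_tightAt ε), fun i b hb => h i b hb ▸ vertex_tightAt ε i⟩

lemma face_nonempty (hc : c ∈ Ico 0 (1 / 2)) (σ : Fin d → Option Bool) :
    (face c σ).Nonempty :=
  ⟨_, vertex_mem_face (ε := fun i => (σ i).getD false) hc fun i b hb => by
    simp [Option.mem_def.1 hb]⟩

lemma face_subset_face_iff (hc : c ∈ Ico 0 (1 / 2)) {σ τ : Fin d → Option Bool} :
    face c σ ⊆ face c τ ↔ ∀ i, ∀ b ∈ τ i, b ∈ σ i := by
  refine ⟨fun h i b hb => ?_, fun h x hx => ⟨hx.1, fun i b hb => hx.2 i b (h i b hb)⟩⟩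
  by_contra hσ
  let ε := Function.update (fun j => (σ j).getD false) i (!b)
  have hv : vertex c ε ∈ face c σ := vertex_mem_face hc fun j b' hb' => by
    rcases eq_or_ne j i with rfl | hj
    · cases b <;> cases b' <;> simp_all [ε]
    · simp [ε, hj, Option.mem_def.1 hb']
  have := TightAt.unique hc hv.1 ((h hv).2 i b hb) (vertex_tightAt ε i)
  simp [ε] at this

noncomputable def signPattern (g : ℕ → ℝ) : Fin d → Option Bool :=
  fun i => if g i = 0 then none else some (decide (0 < g i))

lemma mul_add_abs_mul_le_max {a s t : ℝ} (hst : t ∈ Icc (c * s) (1 - c * s)) :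
    a * t + c * |a| * s ≤ max a 0 := by
  obtain ⟨hlo, hhi⟩ := hst
  rcases le_or_gt 0 a with ha | ha
  · rw [abs_of_nonneg ha, max_eq_left ha]; nlinarith
  · rw [abs_of_neg ha, max_eq_right ha.le]; nlinarith

lemma mul_add_abs_mul_eq_max_iff {a s t : ℝ} (ha : a ≠ 0) :
    a * t + c * |a| * s = max a 0 ↔ t = bound c s (decide (0 < a)) := by
  rcases ha.lt_or_gt with ha | ha
  · rw [abs_of_neg ha, max_eq_right ha.le, decide_eq_false ha.not_gt, bound]
    refine ⟨fun h => ?_, fun h => by rw [h]; ring⟩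
    have : a * (t - c * s) = 0 := by linarith
    linarith [(mul_eq_zero.1 this).resolve_left ha.ne]
  · rw [abs_of_pos ha, max_eq_left ha.le, decide_eq_true ha, bound]
    refine ⟨fun h => ?_, fun h => by rw [h]; ring⟩
    have : a * (t - (1 - c * s)) = 0 := by linarith
    linarith [(mul_eq_zero.1 this).resolve_left ha.ne']

lemma sum_coeff_mul_eq {g : ℕ → ℝ} (hg : g d = 0) (x : Fin d → ℝ) :
    ∑ i : Fin d, (g i + c * |g (i + 1)|) * x i =
      ∑ n ∈ Finset.range d, (g n * seq x (n + 1) + c * |g n| * seq x n) := by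
  have hshift : ∑ n ∈ Finset.range d, c * |g (n + 1)| * seq x (n + 1) =
      ∑ n ∈ Finset.range d, c * |g n| * seq x n := by
    have := Finset.sum_range_succ' (fun n => c * |g n| * seq x n) d
    rw [Finset.sum_range_succ, hg] at this
    simpa using this.symm
  simp_rw [← seq_fin_succ x]
  rw [Fin.sum_univ_eq_sum_range (fun n => (g n + c * |g (n + 1)|) * seq x (n + 1)),
    Finset.sum_add_distrib, ← hshift, ← Finset.sum_add_distrib]
  exact Finset.sum_congr rfl fun n _ => by ring

lemma sum_coeff_mul_le {g : ℕ → ℝ} (hg : g d = 0) {x : Fin d → ℝ}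
    (hx : x ∈ deformedCube c d) :
    ∑ i : Fin d, (g i + c * |g (i + 1)|) * x i ≤ ∑ n ∈ Finset.range d, max (g n) 0 := by
  rw [sum_coeff_mul_eq hg]
  exact Finset.sum_le_sum fun n hn => mul_add_abs_mul_le_max (hx n (Finset.mem_range.1 hn))

lemma sum_coeff_mul_eq_iff {g : ℕ → ℝ} (hg : g d = 0) {x : Fin d → ℝ}
    (hx : x ∈ deformedCube c d) :
    ∑ i : Fin d, (g i + c * |g (i + 1)|) * x i = ∑ n ∈ Finset.range d, max (g n) 0 ↔
      x ∈ face c (signPattern g) := by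
  rw [sum_coeff_mul_eq hg, Finset.sum_eq_sum_iff_of_le fun n hn =>
    mul_add_abs_mul_le_max (hx n (Finset.mem_range.1 hn))]
  simp only [face, mem_ofPred_eq, hx, true_and, Finset.mem_range, Fin.forall_iff]
  refine forall₂_congr fun n hn => ?_
  by_cases hgn : g n = 0
  · simp [signPattern, hgn]
  · simp [signPattern, hgn, mul_add_abs_mul_eq_max_iff hgn, TightAt]

lemma argmax_eq_face {φ : (Fin d → ℝ) → ℝ} {g : ℕ → ℝ} (hg : g d = 0)
    (hφ : ∀ x, φ x = ∑ i : Fin d, (g i + c * |g (i + 1)|) * x i)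
    (hne : (face c (signPattern g) : Set (Fin d → ℝ)).Nonempty) :
    {x ∈ deformedCube c d | ∀ y ∈ deformedCube c d, φ y ≤ φ x} = face c (signPattern g) := by
  obtain ⟨x₀, hx₀⟩ := hne
  simp only [hφ]
  have hmax := (sum_coeff_mul_eq_iff hg hx₀.1).2 hx₀
  ext x
  refine ⟨fun ⟨hx, hle⟩ => (sum_coeff_mul_eq_iff hg hx).1 ?_, fun hx => ⟨hx.1, fun y hy => ?_⟩⟩
  · exact (sum_coeff_mul_le hg hx).antisymm (hmax ▸ hle x₀ hx₀.1)
  · exact (sum_coeff_mul_le hg hy).trans ((sum_coeff_mul_eq_iff hg hx.1).2 hx).ge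

def patternCoeff (σ : Fin d → Option Bool) (n : ℕ) : ℝ :=
  if h : n < d then (σ ⟨n, h⟩).elim 0 fun b => if b then 1 else -1 else 0

lemma signPattern_patternCoeff (σ : Fin d → Option Bool) : signPattern (patternCoeff σ) = σ := by
  funext i
  rcases h : σ i with _ | _ | _ <;> simp [signPattern, patternCoeff, h]

lemma face_isExposed (σ : Fin d → Option Bool) : IsExposed ℝ (deformedCube c d) (face c σ) := by
  intro hne
  let g := patternCoeff σ
  refine ⟨∑ i : Fin d, (g i + c * |g (i + 1)|) • ContinuousLinearMap.proj i, ?_⟩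
  rw [← signPattern_patternCoeff σ] at hne ⊢
  exact (argmax_eq_face (by simp [patternCoeff]) (fun x => by simp [g]) hne).symm

def backCoeff (c : ℝ) (d : ℕ) (μ : ℕ → ℝ) (n : ℕ) : ℝ :=
  if n < d then μ n - c * |backCoeff c d μ (n + 1)| else 0
termination_by d - n

lemma exists_eq_face_of_isExposed (hc : c ∈ Ico 0 (1 / 2)) {B : Set (Fin d → ℝ)}
    (hB : IsExposed ℝ (deformedCube c d) B) (hne : B.Nonempty) : ∃ σ, B = face c σ := by
  obtain ⟨l, rfl⟩ := hB hne
  let μ : ℕ → ℝ := fun n => if h : n < d then l fun j => if ⟨n, h⟩ = j then 1 else 0 else 0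
  let g := backCoeff c d μ
  have hg : g d = 0 := by simp [g, backCoeff]
  have hμ : ∀ i : Fin d, g i + c * |g (i + 1)| = l fun j => if i = j then 1 else 0 := by
    intro i
    have hrec : g i = μ i - c * |g (i + 1)| := by simp only [g]; rw [backCoeff, if_pos i.2]
    simp [hrec, μ]
  refine ⟨signPattern g, argmax_eq_face hg (fun x => ?_) (face_nonempty hc _)⟩
  rw [← l.coe_coe, l.toLinearMap.pi_apply_eq_sum_univ x]
  simp [hμ, mul_comm]

def exposedFace (c : ℝ) (d : ℕ) :
    Option (Fin d → Option Bool) → {F : Set (Fin d → ℝ) // IsExposed ℝ (deformedCube c d) F}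
  | none => ⟨∅, isExposed_empty⟩
  | some σ => ⟨face c σ, face_isExposed σ⟩

lemma exposedFace_surjective (hc : c ∈ Ico 0 (1 / 2)) : Function.Surjective (exposedFace c d) := by
  rintro ⟨B, hB⟩
  rcases B.eq_empty_or_nonempty with rfl | hne
  · exact ⟨none, rfl⟩
  · obtain ⟨σ, rfl⟩ := exists_eq_face_of_isExposed hc hB hne
    exact ⟨some σ, rfl⟩

lemma exposedFace_le_iff (hc : c ∈ Ico 0 (1 / 2)) (o o' : Option (Fin d → Option Bool)) :
    exposedFace c d o ≤ exposedFace c d o' ↔ ∀ σ ∈ o, ∃ τ ∈ o', ∀ i, ∀ b ∈ τ i, b ∈ σ i := by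
  rcases o with _ | σ
  · exact iff_of_true (show (∅ : Set (Fin d → ℝ)) ⊆ _ from empty_subset _) (by simp)
  rcases o' with _ | τ
  · simpa [exposedFace, ← Subtype.coe_le_coe] using (face_nonempty hc σ).ne_empty
  · simp [exposedFace, ← Subtype.coe_le_coe, face_subset_face_iff hc]

theorem nonempty_orderIso_exposedFaces {c' : ℝ} (hc : c ∈ Ico 0 (1 / 2))
    (hc' : c' ∈ Ico 0 (1 / 2)) :
    Nonempty ({F : Set (Fin d → ℝ) // IsExposed ℝ (deformedCube c d) F} ≃o
      {F : Set (Fin d → ℝ) // IsExposed ℝ (deformedCube c' d) F}) :=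
  nonempty_orderIso_of_surjective (exposedFace_surjective hc) (exposedFace_surjective hc')
    fun o o' => by rw [exposedFace_le_iff hc, exposedFace_le_iff hc']

lemma mem_extremePoints_of_forall_tightAt (hc : c ∈ Ico 0 (1 / 2)) {x : Fin d → ℝ}
    {ε : Fin d → Bool} (h : ∀ i, TightAt c x i (ε i)) :
    x ∈ (deformedCube c d).extremePoints ℝ := by
  have hface : face c (fun i => some (ε i)) = {x} := by
    refine eq_singleton_iff_unique_mem.2 ⟨⟨mem_of_forall_tightAt hc h, ?_⟩, ?_⟩
    · rintro i b ⟨⟩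
      exact h i
    · exact fun y hy => eq_of_forall_tightAt (fun i => hy.2 i _ rfl) h
  simpa [hface] using (face_isExposed (c := c) fun i => some (ε i)).isExtreme

/-- Moving along this direction changes `yₖ₊₁` at unit speed and, after `k`, keeps every
constraint tight on the side `β`. -/
def freeDirSeq (c : ℝ) (β : ℕ → Bool) (k : ℕ) : ℕ → ℝ
  | 0 => 0
  | m + 1 => if m < k then 0 else if m = k then 1 else
      bound c (freeDirSeq c β k m) (β m) - bound c 0 (β m)

lemma freeDirSeq_of_le {β : ℕ → Bool} {k m : ℕ} (hm : m ≤ k) : freeDirSeq c β k m = 0 := by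
  cases m with
  | zero => rfl
  | succ m => simp [freeDirSeq, show m < k by omega]

lemma add_smul_freeDir_mem (hc : c ∈ Ico 0 (1 / 2)) {x : Fin d → ℝ}
    (hx : x ∈ deformedCube c d) {β : ℕ → Bool} {k : ℕ}
    (hβ : ∀ m, k < m → m < d → seq x (m + 1) = bound c (seq x m) (β m)) {e : ℝ}
    (he : seq x (k + 1) + e ∈ Icc (c * seq x k) (1 - c * seq x k)) :
    x + e • ofSeq (freeDirSeq c β k) ∈ deformedCube c d := by
  set v := freeDirSeq c β k
  have hseq : ∀ n ≤ d, seq (x + e • ofSeq v) n = seq x n + e * v n := by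
    rintro (_ | n) hn
    · simp [v, freeDirSeq]
    · rw [seq_succ _ hn, seq_succ _ hn]; rfl
  refine forall_mem_Icc_of_tight hc rfl fun n hn => ?_
  rw [hseq n hn.le, hseq (n + 1) hn]
  rcases lt_trichotomy n k with hlt | rfl | hgt
  · left
    simpa [v, freeDirSeq_of_le hlt.le, freeDirSeq_of_le (Nat.succ_le_of_lt hlt)] using hx n hn
  · left
    simpa [v, freeDirSeq_of_le le_rfl, freeDirSeq] using he
  · right
    refine ⟨β n, ?_⟩
    rw [hβ n hgt hn, bound_add_mul]
    simp [v, freeDirSeq, not_lt.2 hgt.le, hgt.ne']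

lemma notMem_extremePoints_of_last_free (hc : c ∈ Ico 0 (1 / 2)) {x : Fin d → ℝ}
    (hx : x ∈ deformedCube c d) {k : Fin d} (hk : ∀ b, ¬TightAt c x k b)
    (hlater : ∀ j, k < j → ∃ b, TightAt c x j b) :
    x ∉ (deformedCube c d).extremePoints ℝ := by
  have hside : ∀ m : ℕ, ∃ b, ∀ hm : m < d, k < m → seq x (m + 1) = bound c (seq x m) b := by
    intro m
    by_cases hm : m < d ∧ (k : ℕ) < m
    · obtain ⟨b, hb⟩ := hlater ⟨m, hm.1⟩ hm.2
      exact ⟨b, fun _ _ => hb⟩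
    · exact ⟨true, fun h1 h2 => absurd ⟨h1, h2⟩ hm⟩
  choose β hβ using hside
  obtain ⟨hlo, hhi⟩ := hx k k.2
  have hlo' : c * seq x k < seq x (k + 1) := hlo.lt_of_ne fun h => hk false h.symm
  have hhi' : seq x (k + 1) < 1 - c * seq x k := hhi.lt_of_ne fun h => hk true h
  obtain ⟨δ, hδ, hδlo, hδhi⟩ : ∃ δ > 0, δ ≤ seq x (k + 1) - c * seq x k ∧
      δ ≤ 1 - c * seq x k - seq x (k + 1) :=
    ⟨_, lt_min (by linarith) (by linarith), min_le_left _ _, min_le_right _ _⟩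
  have hmem : ∀ e, |e| ≤ δ → x + e • ofSeq (freeDirSeq c β k) ∈ deformedCube c d := by
    intro e he
    refine add_smul_freeDir_mem hc hx (fun m hkm hm => hβ m hm hkm) ?_
    have := abs_le.1 he
    constructor <;> linarith
  intro hext
  have hδ_eq := hext.2 (hmem δ (abs_of_pos hδ).le) (hmem (-δ) (by rw [abs_neg, abs_of_pos hδ]))
    (by simpa [neg_smul, ← sub_eq_add_neg] using
      mem_openSegment_add_sub x (δ • ofSeq (d := d) (freeDirSeq c β k)))
  have := congrFun hδ_eq k
  simp [ofSeq, freeDirSeq] at this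
  exact hδ.ne' this

lemma exists_tightAt_of_mem_extremePoints (hc : c ∈ Ico 0 (1 / 2)) {x : Fin d → ℝ}
    (hx : x ∈ (deformedCube c d).extremePoints ℝ) (i : Fin d) : ∃ b, TightAt c x i b := by
  classical
  by_contra hi
  obtain ⟨k, hk, hkmax⟩ := (Finset.univ.filter fun j => ∀ b, ¬TightAt c x j b).exists_max_image
    id ⟨i, by simpa using hi⟩
  simp only [Finset.mem_filter, Finset.mem_univ, true_and, id] at hk hkmax
  refine notMem_extremePoints_of_last_free hc hx.1 hk (fun j hkj => ?_) hx
  by_contra! h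
  exact absurd (hkmax j h) (not_le.2 hkj)

lemma kleeMinty_eq_deformedCube (d : ℕ) : kleeMinty d = deformedCube (1 / 3) d := by
  ext x
  have hx : ∀ n (h : n < d), x ⟨n, h⟩ = seq x (n + 1) := fun n h => (seq_succ x h).symm
  simp only [kleeMinty, deformedCube, mem_ofPred_eq, hx, mem_Icc]
  refine ⟨fun ⟨h0, hs⟩ => ?_, fun h => ⟨fun h0 => by simpa using h 0 h0, fun n hn => h (n + 1) hn⟩⟩
  rintro (_ | n) hn
  · simpa using h0 hn
  · exact hs n hn

lemma stdCube_eq_deformedCube (d : ℕ) : stdCube d = deformedCube 0 d := by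
  ext x
  have hx : ∀ n (h : n < d), x ⟨n, h⟩ = seq x (n + 1) := fun n h => (seq_succ x h).symm
  simp [stdCube, deformedCube, Fin.forall_iff, hx]

lemma kmVertexEq_iff (d : ℕ) (ε : Fin d → Bool) (x : Fin d → ℝ) :
    kmVertexEq d ε x ↔ ∀ i, TightAt (1 / 3) x i (ε i) := by
  have hx : ∀ n (h : n < d), x ⟨n, h⟩ = seq x (n + 1) := fun n h => (seq_succ x h).symm
  simp only [kmVertexEq, TightAt, Fin.forall_iff, hx]
  refine ⟨fun ⟨h0, hs⟩ => ?_, fun h => ⟨fun h0 => ?_, fun n hn => ?_⟩⟩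
  · rintro (_ | n) hn
    · cases hε : ε ⟨0, hn⟩ <;> simpa [hε, bound] using h0 hn
    · cases hε : ε ⟨n + 1, hn⟩ <;> simpa [hε, bound] using hs n hn
  · cases hε : ε ⟨0, h0⟩ <;> simpa [hε, bound] using h 0 h0
  · cases hε : ε ⟨n + 1, hn⟩ <;> simpa [hε, bound] using h (n + 1) hn

end KleeMinty

open KleeMinty

/-- The Klee–Minty cube in dimension `d` is combinatorially isomorphic to the
`d`-cube: its exposed-face poset is order-isomorphic to that of `[0,1]^d`.
In particular its vertices are in bijection with `{0,1}^d`, the vertex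
corresponding to `ε` being determined by the equality choices `ε` in the
defining inequalities. -/
theorem kleeMinty_comb_iso_cube (d : ℕ) :
    Nonempty ({F : Set (Fin d → ℝ) // IsExposed ℝ (kleeMinty d) F} ≃o
              {F : Set (Fin d → ℝ) // IsExposed ℝ (stdCube d) F}) ∧
    (∀ ε : Fin d → Bool, ∃! x : Fin d → ℝ, kmVertexEq d ε x) ∧
    (∀ (ε : Fin d → Bool) (x : Fin d → ℝ), kmVertexEq d ε x →
        x ∈ (kleeMinty d).extremePoints ℝ) ∧
    (∀ x ∈ (kleeMinty d).extremePoints ℝ, ∃ ε : Fin d → Bool, kmVertexEq d ε x) ∧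
    (∀ (ε ε' : Fin d → Bool) (x : Fin d → ℝ),
        kmVertexEq d ε x → kmVertexEq d ε' x → ε = ε') := by
  have hc : (1 / 3 : ℝ) ∈ Ico 0 (1 / 2) := ⟨by norm_num, by norm_num⟩
  rw [kleeMinty_eq_deformedCube, stdCube_eq_deformedCube]
  simp only [kmVertexEq_iff]
  refine ⟨nonempty_orderIso_exposedFaces hc ⟨le_rfl, by norm_num⟩,
    fun ε => ⟨vertex _ ε, vertex_tightAt ε, fun y hy => eq_of_forall_tightAt hy (vertex_tightAt ε)⟩,
    fun ε x hx => mem_extremePoints_of_forall_tightAt hc hx,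
    fun x hx => ?_, fun ε ε' x h h' => ?_⟩
  · choose ε hε using exists_tightAt_of_mem_extremePoints hc hx
    exact ⟨ε, hε⟩
  · exact funext fun i => TightAt.unique hc (mem_of_forall_tightAt hc h) (h i) (h' i)
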